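/- Let g : [0,∞) → ℝ be defined by g(t) = min(C₀, C·h^{-n/2}·e^{-λt}) with C₀, C, λ > 0, h ∈ (0,1), n ≥ 1. Then for γ ≤ 0 with λ + γ > 0, ∫₀^{∞} e^{-γt} g(t) dt ≤ C₀·e^{-γ t*} ·(t* + 1/(λ+γ)) where t* = max(0, (1/λ)·log(C h^{-n/2}/C₀)) is the crossover time. Consequently, for h small, ∫₀^{∞} e^{-γt} g(t) dt ≤ C'·h^{(n/(2λ))γ}·log(1/h). -/

import Mathlib

/-!
Since `λ + γ > 0`, the weight `e^{-γt}` grows more slowly than the dispersive bound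
`A e^{-λt}` (`A = C h^{-n/2}`) decays. Split the integral at the crossover time `t*`, which is
chosen so that `A e^{-λt*} ≤ C₀`. On `(0, t*]` use the uniform bound `C₀` and the monotonicity
of the weight (`γ ≤ 0`), which gives `C₀ e^{-γt*} t*`. On `(t*, ∞)` integrate the dispersive
bound exactly, which gives `A e^{-(λ+γ)t*}/(λ+γ) ≤ C₀ e^{-γt*}/(λ+γ)`. For `h ≤ e^{-1}` we have
`t* ≤ (|log (C/C₀)| + (n/2) log (1/h))/λ`, so `t*` is `O(log (1/h))` and `e^{-γt*}` is
`O(h^{nγ/(2λ)})`.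
-/

open MeasureTheory Set Real

section WeightedIntegral

variable {C₀ A lam γ : ℝ}

theorem exp_mul_min_le_of_le (hγ : γ ≤ 0) (hC₀ : 0 ≤ C₀) {t T : ℝ} (ht : t ≤ T) :
    exp (-γ * t) * min C₀ (A * exp (-lam * t)) ≤ C₀ * exp (-γ * T) :=
  calc exp (-γ * t) * min C₀ (A * exp (-lam * t)) ≤ exp (-γ * t) * C₀ := by
        gcongr; exact min_le_left _ _
    _ ≤ exp (-γ * T) * C₀ := by gcongr; nlinarith
    _ = C₀ * exp (-γ * T) := mul_comm _ _

theorem exp_mul_min_le_exp (t : ℝ) :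
    exp (-γ * t) * min C₀ (A * exp (-lam * t)) ≤ A * exp (-(lam + γ) * t) :=
  calc exp (-γ * t) * min C₀ (A * exp (-lam * t)) ≤ exp (-γ * t) * (A * exp (-lam * t)) := by
        gcongr; exact min_le_right _ _
    _ = A * exp (-(lam + γ) * t) := by
        rw [show -(lam + γ) * t = -γ * t + -lam * t by ring, exp_add]; ring

theorem continuous_exp_mul_min :
    Continuous fun t ↦ exp (-γ * t) * min C₀ (A * exp (-lam * t)) := by
  fun_prop

theorem integrableOn_exp_mul_min (hC₀ : 0 ≤ C₀) (hA : 0 ≤ A) (hlg : 0 < lam + γ) (a : ℝ) :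
    IntegrableOn (fun t ↦ exp (-γ * t) * min C₀ (A * exp (-lam * t))) (Ioi a) := by
  refine ((exp_neg_integrableOn_Ioi a hlg).const_mul A).mono'
    continuous_exp_mul_min.aestronglyMeasurable (ae_of_all _ fun t ↦ ?_)
  rw [norm_of_nonneg (by positivity)]
  exact exp_mul_min_le_exp t

theorem setIntegral_Ioc_exp_mul_min_le (hγ : γ ≤ 0) (hC₀ : 0 ≤ C₀) {T : ℝ} (hT : 0 ≤ T) :
    ∫ t in Ioc 0 T, exp (-γ * t) * min C₀ (A * exp (-lam * t)) ≤ C₀ * exp (-γ * T) * T := by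
  calc ∫ t in Ioc 0 T, exp (-γ * t) * min C₀ (A * exp (-lam * t))
      ≤ ∫ _ in Ioc 0 T, C₀ * exp (-γ * T) :=
        setIntegral_mono_on continuous_exp_mul_min.integrableOn_Ioc
          (integrableOn_const measure_Ioc_lt_top.ne) measurableSet_Ioc
          fun t ht ↦ exp_mul_min_le_of_le hγ hC₀ ht.2
    _ = C₀ * exp (-γ * T) * T := by
        rw [setIntegral_const, volume_real_Ioc_of_le hT, smul_eq_mul, sub_zero, mul_comm]

theorem setIntegral_Ioi_exp_mul_min_le (hC₀ : 0 ≤ C₀) (hA : 0 ≤ A) (hlg : 0 < lam + γ) {T : ℝ}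
    (hAT : A * exp (-lam * T) ≤ C₀) :
    ∫ t in Ioi T, exp (-γ * t) * min C₀ (A * exp (-lam * t)) ≤
      C₀ * exp (-γ * T) * (1 / (lam + γ)) := by
  calc ∫ t in Ioi T, exp (-γ * t) * min C₀ (A * exp (-lam * t))
      ≤ ∫ t in Ioi T, A * exp (-(lam + γ) * t) :=
        setIntegral_mono_on (integrableOn_exp_mul_min hC₀ hA hlg T)
          ((exp_neg_integrableOn_Ioi T hlg).const_mul A) measurableSet_Ioi
          fun t _ ↦ exp_mul_min_le_exp t
    _ = A * exp (-lam * T) * exp (-γ * T) * (1 / (lam + γ)) := by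
        rw [integral_const_mul, integral_exp_mul_Ioi (by linarith),
          show -(lam + γ) * T = -lam * T + -γ * T by ring, exp_add]
        field_simp
    _ ≤ C₀ * exp (-γ * T) * (1 / (lam + γ)) := by gcongr

theorem integral_exp_mul_min_le (hγ : γ ≤ 0) (hC₀ : 0 ≤ C₀) (hA : 0 ≤ A) (hlg : 0 < lam + γ)
    {T : ℝ} (hT : 0 ≤ T) (hAT : A * exp (-lam * T) ≤ C₀) :
    ∫ t in Ioi 0, exp (-γ * t) * min C₀ (A * exp (-lam * t)) ≤
      C₀ * exp (-γ * T) * (T + 1 / (lam + γ)) := by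
  have hf := integrableOn_exp_mul_min hC₀ hA hlg 0
  rw [← Ioc_union_Ioi_eq_Ioi hT, setIntegral_union (Ioc_disjoint_Ioi le_rfl) measurableSet_Ioi
    (hf.mono_set Ioc_subset_Ioi_self) (hf.mono_set (Ioi_subset_Ioi hT)), mul_add]
  exact add_le_add (setIntegral_Ioc_exp_mul_min_le hγ hC₀ hT)
    (setIntegral_Ioi_exp_mul_min_le hC₀ hA hlg hAT)

theorem mul_exp_neg_mul_max_log_div_le (hC₀ : 0 < C₀) (hA : 0 < A) (hlam : 0 < lam) :
    A * exp (-lam * max 0 ((1 / lam) * log (A / C₀))) ≤ C₀ := by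
  set T := max 0 ((1 / lam) * log (A / C₀))
  have hlogT : log (A / C₀) ≤ lam * T :=
    calc log (A / C₀) = lam * ((1 / lam) * log (A / C₀)) := by field_simp
      _ ≤ lam * T := by gcongr; exact le_max_right _ _
  calc A * exp (-lam * T) = C₀ * exp (log (A / C₀) - lam * T) := by
        rw [exp_sub, exp_log (div_pos hA hC₀), neg_mul, exp_neg]
        field_simp
    _ ≤ C₀ * 1 := by gcongr; exact exp_le_one_iff.2 (by linarith)
    _ = C₀ := mul_one C₀

theorem integral_exp_mul_min_le_crossover (hC₀ : 0 < C₀) (hA : 0 < A) (hγ : γ ≤ 0)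
    (hlg : 0 < lam + γ) :
    ∫ t in Ioi 0, exp (-γ * t) * min C₀ (A * exp (-lam * t)) ≤
      C₀ * exp (-γ * max 0 ((1 / lam) * log (A / C₀))) *
        (max 0 ((1 / lam) * log (A / C₀)) + 1 / (lam + γ)) :=
  integral_exp_mul_min_le hγ hC₀.le hA.le hlg (le_max_left _ _)
    (mul_exp_neg_mul_max_log_div_le hC₀ hA (by linarith))

end WeightedIntegral

section SmallSemiclassicalParameter

variable {C₀ C lam γ s h : ℝ}

theorem log_mul_rpow_neg_div (hC₀ : 0 < C₀) (hC : 0 < C) (hh : 0 < h) :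
    log (C * h ^ (-s) / C₀) = log (C / C₀) + s * log (1 / h) := by
  rw [mul_div_right_comm, log_mul (div_pos hC hC₀).ne' (rpow_pos_of_pos hh _).ne', log_rpow hh,
    one_div, log_inv]
  ring

theorem max_zero_log_mul_rpow_neg_div_le (hC₀ : 0 < C₀) (hC : 0 < C) (hlam : 0 < lam)
    (hs : 0 ≤ s) (hh : 0 < h) (hL : 0 ≤ log (1 / h)) :
    max 0 ((1 / lam) * log (C * h ^ (-s) / C₀)) ≤ (|log (C / C₀)| + s * log (1 / h)) / lam := by
  rw [log_mul_rpow_neg_div hC₀ hC hh, one_div_mul_eq_div]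
  refine max_le (by positivity) ?_
  gcongr
  exact le_abs_self _

theorem exp_neg_mul_le_mul_rpow (hγ : γ ≤ 0) (hh : 0 < h) {a T : ℝ}
    (hT : T ≤ (a + s * log (1 / h)) / lam) :
    exp (-γ * T) ≤ exp (-γ * a / lam) * h ^ (s / lam * γ) :=
  calc exp (-γ * T) ≤ exp (-γ * ((a + s * log (1 / h)) / lam)) :=
        exp_le_exp.2 (mul_le_mul_of_nonneg_left hT (neg_nonneg.2 hγ))
    _ = exp (-γ * a / lam) * h ^ (s / lam * γ) := by
        rw [rpow_def_of_pos hh, ← exp_add, one_div, log_inv]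
        ring_nf

theorem crossover_bound_le_rpow_mul_log (hC₀ : 0 < C₀) (hC : 0 < C) (hγ : γ ≤ 0)
    (hlg : 0 < lam + γ) (hs : 0 ≤ s) (hh : 0 < h) (hL : 1 ≤ log (1 / h)) :
    C₀ * exp (-γ * max 0 ((1 / lam) * log (C * h ^ (-s) / C₀))) *
        (max 0 ((1 / lam) * log (C * h ^ (-s) / C₀)) + 1 / (lam + γ)) ≤
      C₀ * exp (-γ * |log (C / C₀)| / lam) * ((|log (C / C₀)| + s) / lam + 1 / (lam + γ)) *
        h ^ (s / lam * γ) * log (1 / h) := by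
  have hlam : 0 < lam := by linarith
  set a := |log (C / C₀)|
  set L := log (1 / h)
  set T := max 0 ((1 / lam) * log (C * h ^ (-s) / C₀))
  have hT : T ≤ (a + s * L) / lam :=
    max_zero_log_mul_rpow_neg_div_le hC₀ hC hlam hs hh (by linarith)
  have hsum : T + 1 / (lam + γ) ≤ ((a + s) / lam + 1 / (lam + γ)) * L := by
    have ha : a ≤ a * L := le_mul_of_one_le_right (abs_nonneg _) hL
    calc T + 1 / (lam + γ) ≤ (a + s * L) / lam + 1 / (lam + γ) * L :=
          add_le_add hT (le_mul_of_one_le_right (by positivity) hL)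
      _ ≤ (a + s) * L / lam + 1 / (lam + γ) * L := by gcongr; linarith
      _ = ((a + s) / lam + 1 / (lam + γ)) * L := by ring
  calc C₀ * exp (-γ * T) * (T + 1 / (lam + γ))
      ≤ C₀ * (exp (-γ * a / lam) * h ^ (s / lam * γ)) * (((a + s) / lam + 1 / (lam + γ)) * L) := by
        gcongr
        exact exp_neg_mul_le_mul_rpow hγ hh hT
    _ = C₀ * exp (-γ * a / lam) * ((a + s) / lam + 1 / (lam + γ)) * h ^ (s / lam * γ) * L := by
        ring

end SmallSemiclassicalParameter

theorem stmt_8_general (n : ℕ) (C₀ C lam γ : ℝ)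
    (hC₀ : 0 < C₀) (hC : 0 < C) (hγ : γ ≤ 0) (hlg : 0 < lam + γ) :
    (∀ h ∈ Set.Ioo (0 : ℝ) 1,
      ∫ t in Set.Ioi (0 : ℝ),
          Real.exp (-γ * t) * min C₀ (C * h ^ (-(n : ℝ) / 2) * Real.exp (-lam * t)) ≤
        C₀ * Real.exp (-γ * max 0 ((1 / lam) * Real.log (C * h ^ (-(n : ℝ) / 2) / C₀))) *
          (max 0 ((1 / lam) * Real.log (C * h ^ (-(n : ℝ) / 2) / C₀)) + 1 / (lam + γ))) ∧
    ∃ C' > 0, ∃ h₀ ∈ Set.Ioo (0 : ℝ) 1, ∀ h ∈ Set.Ioo (0 : ℝ) h₀,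
      ∫ t in Set.Ioi (0 : ℝ),
          Real.exp (-γ * t) * min C₀ (C * h ^ (-(n : ℝ) / 2) * Real.exp (-lam * t)) ≤
        C' * h ^ (((n : ℝ) / (2 * lam)) * γ) * Real.log (1 / h) := by
  have hlam : 0 < lam := by linarith
  have crossover (h : ℝ) (hh : 0 < h) := integral_exp_mul_min_le_crossover (lam := lam) hC₀
    (mul_pos hC (rpow_pos_of_pos hh (-(n : ℝ) / 2))) hγ hlg
  have hexp_one : exp (-1) < 1 := exp_lt_one_iff.2 (by norm_num)
  refine ⟨fun h hh ↦ crossover h hh.1,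
    C₀ * exp (-γ * |log (C / C₀)| / lam) * ((|log (C / C₀)| + n / 2) / lam + 1 / (lam + γ)),
    by positivity, exp (-1), ⟨exp_pos _, hexp_one⟩, fun h hh ↦ (crossover h hh.1).trans ?_⟩
  have hL : 1 ≤ log (1 / h) := by
    rw [one_div, log_inv, le_neg, ← log_exp (-1)]
    exact (log_lt_log hh.1 hh.2).le
  simpa only [neg_div, div_div] using
    crossover_bound_le_rpow_mul_log (s := n / 2) hC₀ hC hγ hlg (by positivity) hh.1 hL

/-- Combined estimate: for `g(t) = min(C₀, C h^{-n/2} e^{-λt})`, `γ ≤ 0` with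
`λ + γ > 0`, and crossover time `t* = max(0, (1/λ)log(C h^{-n/2}/C₀))`, one has
`∫₀^∞ e^{-γt} g(t) dt ≤ C₀ e^{-γ t*}(t* + 1/(λ+γ))`; consequently, for `h`
small, `∫₀^∞ e^{-γt} g(t) dt ≤ C' h^{(n/(2λ))γ} log(1/h)`. -/
theorem stmt_8 (n : ℕ) (hn : 1 ≤ n) (C₀ C lam γ : ℝ)
    (hC₀ : 0 < C₀) (hC : 0 < C) (hlam : 0 < lam) (hγ : γ ≤ 0) (hlg : 0 < lam + γ) :
    (∀ h ∈ Set.Ioo (0 : ℝ) 1,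
      ∫ t in Set.Ioi (0 : ℝ),
          Real.exp (-γ * t) * min C₀ (C * h ^ (-(n : ℝ) / 2) * Real.exp (-lam * t)) ≤
        C₀ * Real.exp (-γ * max 0 ((1 / lam) * Real.log (C * h ^ (-(n : ℝ) / 2) / C₀))) *
          (max 0 ((1 / lam) * Real.log (C * h ^ (-(n : ℝ) / 2) / C₀)) + 1 / (lam + γ))) ∧
    ∃ C' > 0, ∃ h₀ ∈ Set.Ioo (0 : ℝ) 1, ∀ h ∈ Set.Ioo (0 : ℝ) h₀,
      ∫ t in Set.Ioi (0 : ℝ),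
          Real.exp (-γ * t) * min C₀ (C * h ^ (-(n : ℝ) / 2) * Real.exp (-lam * t)) ≤
        C' * h ^ (((n : ℝ) / (2 * lam)) * γ) * Real.log (1 / h) :=
  stmt_8_general n C₀ C lam γ hC₀ hC hγ hlg
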